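/- arXiv:1211.6486 — 8 statements merged into one kernel-verified Lean document; each statement's English description precedes it below -/
import Mathlib

section
/- Let p be a probability distribution on colors indexed by a finite set S, and define Q(i) = p_i^2 · ∑_{k≥0} (k+1)! · ∑_{J ⊆ S\{i}, |J|=k} ∏_{j∈J} p_j (the Method 2 pair-color probability). If p_i ≥ p_j > 0, then Q(i)/p_i^2 ≤ Q(j)/p_j^2. -/
/-!
After cancelling `p m ^ 2`, `Q m / p m ^ 2` is a combination with positive coefficients of the
elementary symmetric sums `e_k` of the weights of the colours other than `m`. Writing `C` for the
colours other than `i` and `j`,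
`e_k(S \ {i}) = e_k(C) + p j * e_{k-1}(C) ≤ e_k(C) + p i * e_{k-1}(C) = e_k(S \ {j})`.
-/

open Finset

section ElementarySymmetric

variable {ι R : Type*} [DecidableEq ι] [CommSemiring R]

theorem sum_powersetCard_succ_insert_prod (p : ι → R) {a : ι} {C : Finset ι} (ha : a ∉ C)
    (n : ℕ) :
    ∑ J ∈ powersetCard (n + 1) (insert a C), ∏ l ∈ J, p l
      = ∑ J ∈ powersetCard (n + 1) C, ∏ l ∈ J, p l
        + p a * ∑ J ∈ powersetCard n C, ∏ l ∈ J, p l := by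
  have not_mem {J : Finset ι} {m : ℕ} (hJ : J ∈ powersetCard m C) : a ∉ J :=
    fun h => ha ((mem_powersetCard.1 hJ).1 h)
  rw [powersetCard_succ_insert ha, sum_union, mul_sum, sum_image]
  · exact congrArg _ (sum_congr rfl fun J hJ => prod_insert (not_mem hJ))
  · intro J₁ h₁ J₂ h₂ h
    rw [← erase_insert (not_mem h₁), ← erase_insert (not_mem h₂), h]
  · rw [disjoint_left]
    rintro J hJ hJ'
    obtain ⟨J', -, rfl⟩ := mem_image.1 hJ'
    exact not_mem hJ (mem_insert_self a J')

variable [PartialOrder R] [IsOrderedRing R]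

theorem sum_powersetCard_erase_prod_le (p : ι → R) (hp : ∀ l, 0 ≤ p l) {s : Finset ι}
    {i j : ι} (hi : i ∈ s) (hj : j ∈ s) (hij : p j ≤ p i) (k : ℕ) :
    ∑ J ∈ powersetCard k (s.erase i), ∏ l ∈ J, p l
      ≤ ∑ J ∈ powersetCard k (s.erase j), ∏ l ∈ J, p l := by
  obtain rfl | hne := eq_or_ne i j
  · rfl
  set C := (s.erase i).erase j
  have hiC : i ∉ C := fun h => (mem_erase.1 (mem_erase.1 h).2).1 rfl
  have hjC : j ∉ C := fun h => (mem_erase.1 h).1 rfl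
  have hsi : s.erase i = insert j C := (insert_erase (mem_erase.2 ⟨hne.symm, hj⟩)).symm
  have hsj : s.erase j = insert i C := by
    rw [show C = (s.erase j).erase i from erase_right_comm,
      insert_erase (mem_erase.2 ⟨hne, hi⟩)]
  rw [hsi, hsj]
  cases k with
  | zero => simp
  | succ n =>
    rw [sum_powersetCard_succ_insert_prod p hjC, sum_powersetCard_succ_insert_prod p hiC]
    have hsum : 0 ≤ ∑ J ∈ powersetCard n C, ∏ l ∈ J, p l :=
      sum_nonneg fun J _ => prod_nonneg fun l _ => hp l
    exact add_le_add_right (mul_le_mul_of_nonneg_right hij hsum) _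

end ElementarySymmetric

theorem stmt_2_general {ι : Type*} [Fintype ι] [DecidableEq ι] (p : ι → ℝ)
    (hnn : ∀ l, 0 ≤ p l) (i j : ι)
    (hij : p j ≤ p i) (hj : 0 < p j)
    (Q : ι → ℝ)
    (hQ : ∀ m, Q m = p m ^ 2 * ∑ k ∈ Finset.range (Fintype.card ι),
      (Nat.factorial (k + 1) : ℝ) *
        ∑ J ∈ Finset.powersetCard k (Finset.univ.erase m), ∏ l ∈ J, p l) :
    Q i / p i ^ 2 ≤ Q j / p j ^ 2 := by
  have hi : 0 < p i := hj.trans_le hij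
  rw [hQ i, hQ j, mul_div_cancel_left₀ _ (by positivity),
    mul_div_cancel_left₀ _ (by positivity)]
  exact sum_le_sum fun k _ => mul_le_mul_of_nonneg_left
    (sum_powersetCard_erase_prod_le p hnn (mem_univ i) (mem_univ j) hij k) (by positivity)

theorem stmt_2 {ι : Type*} [Fintype ι] [DecidableEq ι] (p : ι → ℝ)
    (hnn : ∀ l, 0 ≤ p l) (hsum : ∑ l, p l = 1) (i j : ι)
    (hij : p j ≤ p i) (hj : 0 < p j)
    (Q : ι → ℝ)
    (hQ : ∀ m, Q m = p m ^ 2 * ∑ k ∈ Finset.range (Fintype.card ι),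
      (Nat.factorial (k + 1) : ℝ) *
        ∑ J ∈ Finset.powersetCard k (Finset.univ.erase m), ∏ l ∈ J, p l) :
    Q i / p i ^ 2 ≤ Q j / p j ^ 2 :=
  stmt_2_general p hnn i j hij hj Q hQ
end

section
/- Let p be a probability distribution on colors indexed by a finite set S, with Q(i) = p_i^2 · ∑_{k≥0} (k+1)! · ∑_{J ⊆ S\{i}, |J|=k} ∏_{j∈J} p_j. If p_i > p_j > 0, then Q(i)/p_i^2 < Q(j)/p_j^2 (strict inequality). -/
theorem stmt_3 {ι : Type*} [Fintype ι] [DecidableEq ι] (p : ι → ℝ)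
    (hnn : ∀ l, 0 ≤ p l) (hsum : ∑ l, p l = 1) (i j : ι)
    (hij : p j < p i) (hj : 0 < p j)
    (Q : ι → ℝ)
    (hQ : ∀ m, Q m = p m ^ 2 * ∑ k ∈ Finset.range (Fintype.card ι),
      (Nat.factorial (k + 1) : ℝ) *
        ∑ J ∈ Finset.powersetCard k (Finset.univ.erase m), ∏ l ∈ J, p l) :
    Q i / p i ^ 2 < Q j / p j ^ 2 := by
  classical
  have hne : i ≠ j := fun h => by simp [h] at hij
  -- rewrite sums over subsets of univ.erase j as sums over subsets of univ.erase i
  have hmap : ∀ k, ∑ J ∈ Finset.powersetCard k (Finset.univ.erase j), ∏ l ∈ J, p l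
      = ∑ J ∈ Finset.powersetCard k (Finset.univ.erase i), ∏ l ∈ J, p (Equiv.swap i j l) := by
    intro k
    refine Finset.sum_nbij' (fun J => J.image (Equiv.swap i j))
      (fun J => J.image (Equiv.swap i j)) ?_ ?_ ?_ ?_ ?_
    · intro J hJ
      rw [Finset.mem_powersetCard] at hJ ⊢
      constructor
      · intro x hx
        obtain ⟨y, hy, rfl⟩ := Finset.mem_image.mp hx
        have hyj : y ≠ j := Finset.ne_of_mem_erase (hJ.1 hy)
        have : Equiv.swap i j y ≠ i := by
          intro h
          have := (Equiv.swap i j).injective (a₁ := y) (a₂ := j) (by simpa using h)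
          exact hyj this
        exact Finset.mem_erase.mpr ⟨this, Finset.mem_univ _⟩
      · rw [Finset.card_image_of_injective _ (Equiv.swap i j).injective, hJ.2]
    · intro J hJ
      rw [Finset.mem_powersetCard] at hJ ⊢
      constructor
      · intro x hx
        obtain ⟨y, hy, rfl⟩ := Finset.mem_image.mp hx
        have hyi : y ≠ i := Finset.ne_of_mem_erase (hJ.1 hy)
        have : Equiv.swap i j y ≠ j := by
          intro h
          have := (Equiv.swap i j).injective (a₁ := y) (a₂ := i) (by simpa using h)
          exact hyi this
        exact Finset.mem_erase.mpr ⟨this, Finset.mem_univ _⟩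
      · rw [Finset.card_image_of_injective _ (Equiv.swap i j).injective, hJ.2]
    · intro J _
      show Finset.image _ (Finset.image _ J) = J
      rw [Finset.image_image,
        show ⇑(Equiv.swap i j) ∘ ⇑(Equiv.swap i j) = id from funext (Equiv.swap_apply_self i j),
        Finset.image_id]
    · intro J _
      show Finset.image _ (Finset.image _ J) = J
      rw [Finset.image_image,
        show ⇑(Equiv.swap i j) ∘ ⇑(Equiv.swap i j) = id from funext (Equiv.swap_apply_self i j),
        Finset.image_id]
    · intro J _
      rw [Finset.prod_image (fun x _ y _ h => (Equiv.swap i j).injective h)]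
      simp [Equiv.swap_apply_self]
  have hptle : ∀ J : Finset ι, J ⊆ Finset.univ.erase i →
      ∏ l ∈ J, p l ≤ ∏ l ∈ J, p (Equiv.swap i j l) := by
    intro J hJ
    refine Finset.prod_le_prod (fun l _ => hnn l) ?_
    intro l hl
    have hli : l ≠ i := Finset.ne_of_mem_erase (hJ hl)
    by_cases hlj : l = j
    · subst hlj; rw [Equiv.swap_apply_right]; exact hij.le
    · rw [Equiv.swap_apply_of_ne_of_ne hli hlj]
  have hle : ∀ k, ∑ J ∈ Finset.powersetCard k (Finset.univ.erase i), ∏ l ∈ J, p l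
      ≤ ∑ J ∈ Finset.powersetCard k (Finset.univ.erase j), ∏ l ∈ J, p l := by
    intro k
    rw [hmap k]
    refine Finset.sum_le_sum ?_
    intro J hJ
    exact hptle J (Finset.mem_powersetCard.mp hJ).1
  have hlt1 : ∑ J ∈ Finset.powersetCard 1 (Finset.univ.erase i), ∏ l ∈ J, p l
      < ∑ J ∈ Finset.powersetCard 1 (Finset.univ.erase j), ∏ l ∈ J, p l := by
    rw [hmap 1]
    refine Finset.sum_lt_sum (fun J hJ => hptle J (Finset.mem_powersetCard.mp hJ).1) ?_
    refine ⟨{j}, ?_, ?_⟩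
    · rw [Finset.mem_powersetCard]
      constructor
      · intro x hx
        rw [Finset.mem_singleton] at hx
        subst hx
        exact Finset.mem_erase.mpr ⟨(Ne.symm hne), Finset.mem_univ _⟩
      · simp
    · simp [Equiv.swap_apply_right, hij]
  have hpi : (0:ℝ) < p i := lt_trans hj hij
  have h1mem : 1 ∈ Finset.range (Fintype.card ι) := by
    rw [Finset.mem_range]
    have : 1 < Fintype.card ι := Fintype.one_lt_card_iff.mpr ⟨i, j, hne⟩
    omega
  rw [hQ i, hQ j, mul_div_cancel_left₀ _ (pow_ne_zero 2 hpi.ne'),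
    mul_div_cancel_left₀ _ (pow_ne_zero 2 hj.ne')]
  refine Finset.sum_lt_sum ?_ ⟨1, h1mem, ?_⟩
  · intro k _
    exact mul_le_mul_of_nonneg_left (hle k) (by positivity)
  · exact mul_lt_mul_of_pos_left hlt1 (by positivity)
end

section
/- Let p be a probability distribution on a finite set S of colors. The Method 1 distribution (P(X=i) = p_i^2/∑_j p_j^2) equals the Method 2 distribution (P(Y=i) proportional to p_i^2 ∑_k (k+1)! ∑_{J⊆S\{i},|J|=k} ∏_{j∈J} p_j) if and only if p is uniform on its support. -/
/-!
Both laws are normalisations of `p i ^ 2` reweighted: Method 2 multiplies it by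
`W i = ∑ₖ (k + 1)! eₖ(p restricted to S \ {i})`, so the two laws agree exactly when `W` is
constant on the support of `p`. Peeling off the colour `j` from `S \ {i}` (and `i` from
`S \ {j}`) shows `W i - W j = (p j - p i) * G` with `G > 0`, since all elementary symmetric
polynomials of nonnegative numbers are nonnegative and `e₀ = 1`. Hence `W i = W j` iff
`p i = p j`.
-/

open Finset

namespace Multiset

variable {R : Type*}

section CommSemiring

variable [CommSemiring R]

@[simp]
theorem esymm_zero (s : Multiset R) : s.esymm 0 = 1 := by
  simp [esymm]

theorem esymm_cons_succ (a : R) (s : Multiset R) (k : ℕ) :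
    (a ::ₘ s).esymm (k + 1) = s.esymm (k + 1) + a * s.esymm k := by
  simp [esymm, powersetCard_cons, map_map, sum_map_mul_left]

theorem esymm_nonneg [PartialOrder R] [IsOrderedRing R] {s : Multiset R}
    (hs : ∀ a ∈ s, 0 ≤ a) (k : ℕ) : 0 ≤ s.esymm k :=
  sum_nonneg fun _ hx ↦ by
    obtain ⟨t, ht, rfl⟩ := mem_map.1 hx
    exact prod_nonneg fun a ha ↦ hs a (mem_of_le (mem_powersetCard.1 ht).1 ha)

end CommSemiring

section CommRing

variable [CommRing R]

theorem sum_mul_esymm_cons_sub_sum_mul_esymm_cons (w : ℕ → R) (x y : R) (s : Multiset R)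
    (n : ℕ) :
    ∑ k ∈ Finset.range (n + 1), w k * (x ::ₘ s).esymm k -
        ∑ k ∈ Finset.range (n + 1), w k * (y ::ₘ s).esymm k =
      (x - y) * ∑ k ∈ Finset.range n, w (k + 1) * s.esymm k := by
  simp only [sum_range_succ' _ n, esymm_cons_succ, esymm_zero, add_sub_add_right_eq_sub,
    ← sum_sub_distrib, mul_sum]
  exact sum_congr rfl fun k _ ↦ by ring

variable [LinearOrder R] [IsStrictOrderedRing R]

theorem sum_mul_esymm_pos {s : Multiset R} (hs : ∀ a ∈ s, 0 ≤ a) {w : ℕ → R}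
    (hw : ∀ k, 0 < w k) (n : ℕ) : 0 < ∑ k ∈ Finset.range (n + 1), w k * s.esymm k := by
  rw [sum_range_succ', esymm_zero, mul_one]
  exact add_pos_of_nonneg_of_pos
    (Finset.sum_nonneg fun k _ ↦ mul_nonneg (hw _).le (esymm_nonneg hs _)) (hw 0)

theorem sum_mul_esymm_cons_eq_iff {s : Multiset R} (hs : ∀ a ∈ s, 0 ≤ a) {w : ℕ → R}
    (hw : ∀ k, 0 < w k) (n : ℕ) (x y : R) :
    ∑ k ∈ Finset.range (n + 2), w k * (x ::ₘ s).esymm k =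
        ∑ k ∈ Finset.range (n + 2), w k * (y ::ₘ s).esymm k ↔ x = y := by
  rw [← sub_eq_zero, sum_mul_esymm_cons_sub_sum_mul_esymm_cons, mul_eq_zero, sub_eq_zero,
    or_iff_left (sum_mul_esymm_pos hs (fun k ↦ hw (k + 1)) n).ne']

end CommRing

end Multiset

theorem div_sum_eq_mul_div_sum_mul_iff {ι R : Type*} [Fintype ι] [Field R] [LinearOrder R]
    [IsStrictOrderedRing R] {a c : ι → R} (ha : ∀ i, 0 ≤ a i) (hc : ∀ i, 0 < c i) :
    (∀ i, a i / ∑ l, a l = a i * c i / ∑ l, a l * c l) ↔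
      ∀ i j, a i ≠ 0 → a j ≠ 0 → c i = c j := by
  by_cases hzero : ∀ i, a i = 0
  · simp [hzero]
  obtain ⟨w, hw⟩ := not_forall.1 hzero
  have hS : 0 < ∑ l, a l := sum_pos' (fun l _ ↦ ha l) ⟨w, mem_univ _, (ha w).lt_of_ne' hw⟩
  have hT : 0 < ∑ l, a l * c l :=
    sum_pos' (fun l _ ↦ mul_nonneg (ha l) (hc l).le)
      ⟨w, mem_univ _, mul_pos ((ha w).lt_of_ne' hw) (hc w)⟩
  constructor
  · intro h
    have hconst : ∀ i, a i ≠ 0 → c i = (∑ l, a l * c l) / ∑ l, a l := fun i hi ↦ by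
      have := h i
      rw [div_eq_div_iff hS.ne' hT.ne'] at this
      rw [eq_div_iff hS.ne']
      exact mul_left_cancel₀ hi (by linear_combination -this)
    intro i j hi hj
    rw [hconst i hi, hconst j hj]
  · intro h i
    rcases eq_or_ne (a i) 0 with hi | hi
    · simp [hi]
    have hT_eq : ∑ l, a l * c l = (∑ l, a l) * c i := by
      rw [sum_mul]
      refine sum_congr rfl fun l _ ↦ ?_
      rcases eq_or_ne (a l) 0 with hl | hl
      · simp [hl]
      · rw [h l i hl hi]
    rw [hT_eq, mul_div_mul_right _ _ (hc i).ne']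

section RepeatWeight

variable {ι : Type*} [Fintype ι] [DecidableEq ι]

/-- Method 2 gives colour `m` the probability `p m ^ 2 * repeatWeight p m`, normalised. -/
noncomputable def repeatWeight (p : ι → ℝ) (m : ι) : ℝ :=
  ∑ k ∈ range (Fintype.card ι), ((k + 1).factorial : ℝ) * ((univ.erase m).val.map p).esymm k

theorem repeatWeight_pos {p : ι → ℝ} (hnn : ∀ l, 0 ≤ p l) (m : ι) :
    0 < repeatWeight p m := by
  obtain ⟨n, hn⟩ := Nat.exists_eq_add_one.2 (Fintype.card_pos_iff.2 ⟨m⟩)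
  rw [repeatWeight, hn]
  exact Multiset.sum_mul_esymm_pos (by simp [hnn]) (fun k ↦ by positivity) n

theorem repeatWeight_eq_repeatWeight_iff {p : ι → ℝ} (hnn : ∀ l, 0 ≤ p l) {i j : ι} :
    repeatWeight p i = repeatWeight p j ↔ p i = p j := by
  rcases eq_or_ne i j with rfl | hij
  · simp
  obtain ⟨n, hn⟩ : ∃ n, Fintype.card ι = n + 2 :=
    ⟨Fintype.card ι - 2, by have := Fintype.one_lt_card_iff.2 ⟨i, j, hij⟩; omega⟩
  have erase_eq_cons : ∀ a b : ι, a ≠ b →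
      (univ.erase a).val.map p = p b ::ₘ ((univ.erase a).erase b).val.map p := fun a b hab ↦ by
    rw [← Multiset.map_cons, erase_val (univ.erase a) b,
      Multiset.cons_erase (s := (univ.erase a).val) (mem_erase.2 ⟨hab.symm, mem_univ b⟩)]
  rw [repeatWeight, repeatWeight, hn, erase_eq_cons i j hij, erase_eq_cons j i hij.symm,
    erase_right_comm, Multiset.sum_mul_esymm_cons_eq_iff (by simp [hnn]) (fun k ↦ by positivity),
    eq_comm]

end RepeatWeight

theorem stmt_4_general {ι : Type*} [Fintype ι] [DecidableEq ι] (p : ι → ℝ)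
    (hnn : ∀ l, 0 ≤ p l)
    (Q : ι → ℝ)
    (hQ : ∀ m, Q m = p m ^ 2 * ∑ k ∈ Finset.range (Fintype.card ι),
      (Nat.factorial (k + 1) : ℝ) *
        ∑ J ∈ Finset.powersetCard k (Finset.univ.erase m), ∏ l ∈ J, p l) :
    (∀ i, p i ^ 2 / (∑ l, p l ^ 2) = Q i / (∑ l, Q l)) ↔
      (∀ i j, p i ≠ 0 → p j ≠ 0 → p i = p j) := by
  obtain rfl : Q = fun m ↦ p m ^ 2 * repeatWeight p m := by
    ext m
    simp only [hQ, repeatWeight, esymm_map_val]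
  rw [div_sum_eq_mul_div_sum_mul_iff (fun i ↦ sq_nonneg (p i)) (repeatWeight_pos hnn)]
  simp only [ne_eq, pow_eq_zero_iff two_ne_zero, repeatWeight_eq_repeatWeight_iff hnn]

theorem stmt_4 {ι : Type*} [Fintype ι] [DecidableEq ι] (p : ι → ℝ)
    (hnn : ∀ l, 0 ≤ p l) (hsum : ∑ l, p l = 1)
    (Q : ι → ℝ)
    (hQ : ∀ m, Q m = p m ^ 2 * ∑ k ∈ Finset.range (Fintype.card ι),
      (Nat.factorial (k + 1) : ℝ) *
        ∑ J ∈ Finset.powersetCard k (Finset.univ.erase m), ∏ l ∈ J, p l) :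
    (∀ i, p i ^ 2 / (∑ l, p l ^ 2) = Q i / (∑ l, Q l)) ↔
      (∀ i j, p i ≠ 0 → p j ≠ 0 → p i = p j) :=
  stmt_4_general p hnn Q hQ
end

section
/- For x₁ = (3 + √(3(−3+2√3)))/6, the value d₁(x₁) of the function d₁(x) = x²/(x²+(1−x)²) − x²(1+2(1−x)) equals 1/√(135 + 78√3). -/
/-!
Write `s = √3` and `t = √(6√3 - 9)`, so that `x₁ = (3 + t) / 6`. Then `x₁² + (1 - x₁)² = s / 3`, which
turns `d₁(x₁)` into `t (2 - s) / (3 s)`, a positive number. Its square is `(26 √3 - 45) / 9` because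
`t² = 6 s - 9` and `s² = 3`, and so is `1 / (135 + 78 √3)`, as `(26 √3 - 45)(135 + 78 √3) = 9`.
-/

open Real

/-- The function `d₁` of the paper. -/
noncomputable def twoColorDiscrepancy (x : ℝ) : ℝ :=
  x ^ 2 / (x ^ 2 + (1 - x) ^ 2) - x ^ 2 * (1 + 2 * (1 - x))

lemma twoColorDiscrepancy_eq {s t : ℝ} (hs : s ^ 2 = 3) (ht : t ^ 2 = 3 * (-3 + 2 * s)) :
    twoColorDiscrepancy ((3 + t) / 6) = t * (2 - s) / (3 * s) := by
  have hs0 : s ≠ 0 := by rintro rfl; norm_num at hs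
  have hden : ((3 + t) / 6) ^ 2 + (1 - (3 + t) / 6) ^ 2 = s / 3 := by
    linear_combination (1 / 18) * ht
  rw [twoColorDiscrepancy, hden]
  field_simp
  linear_combination (36 * t) * hs + (54 + 6 * s * t) * ht

lemma sq_mul_two_sub_div_eq {s t : ℝ} (hs : s ^ 2 = 3) (ht : t ^ 2 = 3 * (-3 + 2 * s)) :
    (t * (2 - s) / (3 * s)) ^ 2 = (26 * s - 45) / 9 := by
  have hs0 : s ≠ 0 := by rintro rfl; norm_num at hs
  field_simp
  linear_combination 9 * (2 - s) ^ 2 * ht + (108 - 180 * s) * hs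

lemma sq_one_div_sqrt_eq : (1 / √(135 + 78 * √3)) ^ 2 = (26 * √3 - 45) / 9 := by
  have hs : √3 ^ 2 = 3 := sq_sqrt (by norm_num)
  rw [div_pow, sq_sqrt (by positivity), one_pow, div_eq_div_iff (by positivity) (by norm_num)]
  linear_combination (-2028) * hs

theorem stmt_8 (x₁ : ℝ) (hx₁ : x₁ = (3 + Real.sqrt (3 * (-3 + 2 * Real.sqrt 3))) / 6) :
    x₁ ^ 2 / (x₁ ^ 2 + (1 - x₁) ^ 2) - x₁ ^ 2 * (1 + 2 * (1 - x₁)) =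
      1 / Real.sqrt (135 + 78 * Real.sqrt 3) := by
  have hs : √3 ^ 2 = 3 := sq_sqrt (by norm_num)
  have hs_gt : 3 / 2 < √3 := lt_sqrt_of_sq_lt (by norm_num)
  have hs_lt : √3 < 2 := (sqrt_lt' (by norm_num)).2 (by norm_num)
  have ht : √(3 * (-3 + 2 * √3)) ^ 2 = 3 * (-3 + 2 * √3) := sq_sqrt (by linarith)
  have ht_pos : 0 < √(3 * (-3 + 2 * √3)) := sqrt_pos.2 (by linarith)
  change twoColorDiscrepancy x₁ = _
  rw [hx₁, twoColorDiscrepancy_eq hs ht]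
  refine (sq_eq_sq₀ ?_ (by positivity)).1 ?_
  · have : 0 < 2 - √3 := by linarith
    positivity
  · rw [sq_mul_two_sub_div_eq hs ht, sq_one_div_sqrt_eq]
end

section
/- For all x ∈ [0,1], |x²/(x²+(1−x)²) − x²(1 + 2(1−x))| ≤ 1/√(135 + 78√3), with equality iff x = (3 + √(3(−3+2√3)))/6 or x = 1 − (3 + √(3(−3+2√3)))/6. -/
/-!
Put `t = x (1 - x) ∈ [0, 1/4]` and `c = 135 + 78 √3`. The discrepancy equals
`2 t² (2x - 1) / (1 - 2t)`, and its square is `4 t⁴ (1 - 4t) / (1 - 2t)²`. The polynomial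
`(1 - 2t)² - 4 c t⁴ (1 - 4t)` factors as `16 c (t - t₀)² Q(t)` with `t₀ = (3 - √3)/6` and
a cubic `Q` whose coefficients are all positive, so `c · D(x)² ≤ 1` on `[0, 1]`, with
equality exactly when `x (1 - x) = t₀`, i.e. at `x₁` and `1 - x₁`.
-/

open Real

noncomputable def discrepancy (x : ℝ) : ℝ :=
  x ^ 2 / (x ^ 2 + (1 - x) ^ 2) - x ^ 2 * (1 + 2 * (1 - x))

noncomputable def cofactorCubic (t : ℝ) : ℝ :=
  t ^ 3 + (3 / 4 - √3 / 3) * t ^ 2 + (3 / 4 - 5 / 12 * √3) * t + (7 / 24 * √3 - 1 / 2)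

lemma sq_sub_mul_pow_four_eq (t : ℝ) :
    (1 - 2 * t) ^ 2 - 4 * (135 + 78 * √3) * t ^ 4 * (1 - 4 * t)
      = 16 * (135 + 78 * √3) * (t - (3 - √3) / 6) ^ 2 * cofactorCubic t := by
  have h3 : √3 ^ 2 = 3 := sq_sqrt (by norm_num)
  unfold cofactorCubic
  linear_combination ((-271/3 : ℝ) + (121/2) * √3 + (-91/9) * √3 ^ 2 + (1489/3) * t
    + (-209) * t * √3 + (130/9) * t * √3 ^ 2 + (-2299/3) * t ^ 2 + 98 * t ^ 2 * √3
    + (104/9) * t ^ 2 * √3 ^ 2 + 180 * t ^ 3 + 104 * t ^ 3 * √3) * h3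

lemma cofactorCubic_pos {t : ℝ} (ht : 0 ≤ t) : 0 < cofactorCubic t := by
  have lower : 12 / 7 < √3 := (lt_sqrt (by norm_num)).2 (by norm_num)
  have upper : √3 < 9 / 5 := (sqrt_lt' (by norm_num)).2 (by norm_num)
  unfold cofactorCubic
  have h2 : 0 ≤ (3 / 4 - √3 / 3) * t ^ 2 := mul_nonneg (by linarith) (sq_nonneg t)
  have h1 : 0 ≤ (3 / 4 - 5 / 12 * √3) * t := mul_nonneg (by linarith) ht
  have h0 : 0 < 7 / 24 * √3 - 1 / 2 := by linarith
  linarith [pow_nonneg ht 3]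

lemma discrepancy_eq (x : ℝ) :
    discrepancy x = 2 * (x * (1 - x)) ^ 2 * (2 * x - 1) / (1 - 2 * (x * (1 - x))) := by
  have hD : x ^ 2 + (1 - x) ^ 2 ≠ 0 := by nlinarith [sq_nonneg (2 * x - 1)]
  rw [discrepancy, div_sub' hD]
  congr 1 <;> ring

lemma one_sub_mul_discrepancy_sq (x : ℝ) :
    1 - (135 + 78 * √3) * discrepancy x ^ 2
      = 16 * (135 + 78 * √3) * (x * (1 - x) - (3 - √3) / 6) ^ 2 * cofactorCubic (x * (1 - x))
          / (1 - 2 * (x * (1 - x))) ^ 2 := by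
  have hD : 1 - 2 * (x * (1 - x)) ≠ 0 := by nlinarith [sq_nonneg (2 * x - 1)]
  rw [← sq_sub_mul_pow_four_eq, discrepancy_eq, div_pow, mul_div_assoc',
    one_sub_div (pow_ne_zero 2 hD)]
  ring

lemma abs_le_one_div_sqrt_iff {c y : ℝ} (hc : 0 < c) : |y| ≤ 1 / √c ↔ c * y ^ 2 ≤ 1 := by
  rw [le_div_iff₀ (sqrt_pos.2 hc), ← sqrt_sq_eq_abs, ← sqrt_mul' _ hc.le, mul_comm,
    sqrt_le_one]

lemma abs_eq_one_div_sqrt_iff {c y : ℝ} (hc : 0 < c) : |y| = 1 / √c ↔ c * y ^ 2 = 1 := by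
  rw [eq_div_iff (sqrt_pos.2 hc).ne', ← sqrt_sq_eq_abs, ← sqrt_mul' _ hc.le, mul_comm,
    sqrt_eq_one]

lemma mul_one_sub_eq_mul_one_sub_iff {x y : ℝ} :
    x * (1 - x) = y * (1 - y) ↔ x = y ∨ x = 1 - y := by
  have h : x * (1 - x) - y * (1 - y) = (x - y) * (1 - y - x) := by ring
  rw [← sub_eq_zero, h, mul_eq_zero, sub_eq_zero, sub_eq_zero, eq_comm (a := 1 - y)]

theorem stmt_9 (x₁ : ℝ) (hx₁ : x₁ = (3 + Real.sqrt (3 * (-3 + 2 * Real.sqrt 3))) / 6) :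
    ∀ x ∈ Set.Icc (0 : ℝ) 1,
      |x ^ 2 / (x ^ 2 + (1 - x) ^ 2) - x ^ 2 * (1 + 2 * (1 - x))| ≤
        1 / Real.sqrt (135 + 78 * Real.sqrt 3) ∧
      (|x ^ 2 / (x ^ 2 + (1 - x) ^ 2) - x ^ 2 * (1 + 2 * (1 - x))| =
          1 / Real.sqrt (135 + 78 * Real.sqrt 3) ↔ x = x₁ ∨ x = 1 - x₁) := by
  intro x ⟨hx0, hx1⟩
  have hc : 0 < 135 + 78 * √3 := by positivity
  have hx₁_root : x₁ * (1 - x₁) = (3 - √3) / 6 := by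
    have hb : √(3 * (-3 + 2 * √3)) ^ 2 = 3 * (-3 + 2 * √3) :=
      sq_sqrt (by nlinarith [sqrt_nonneg 3, sq_sqrt (show (0 : ℝ) ≤ 3 by norm_num)])
    rw [hx₁]
    linear_combination (-1 / 36 : ℝ) * hb
  change |discrepancy x| ≤ _ ∧ (|discrepancy x| = _ ↔ _)
  rw [abs_le_one_div_sqrt_iff hc, abs_eq_one_div_sqrt_iff hc, ← sub_nonneg, eq_comm,
    ← sub_eq_zero, one_sub_mul_discrepancy_sq]
  have hQ := cofactorCubic_pos (mul_nonneg hx0 (sub_nonneg.2 hx1))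
  have hD : 1 - 2 * (x * (1 - x)) ≠ 0 := by nlinarith [sq_nonneg (2 * x - 1)]
  refine ⟨by positivity, ?_⟩
  rw [← mul_one_sub_eq_mul_one_sub_iff, hx₁_root, ← sub_eq_zero (a := x * (1 - x))]
  simp [hc.ne', hQ.ne', hD]
end

section
/- Let p be a distribution on n+1 colors of the form p(n,x) = (x, (1−x)/n, ..., (1−x)/n) with x ∈ (1/(n+1), 1). Then the discrepancy satisfies D(p) = x²/(x² + (1−x)²/n) − x² ∑_{k=0}^{n} (k+1)! · C(n,k) · ((1−x)/n)^k, i.e., the total variation distance between the Method 1 and Method 2 pair distributions equals P(X=0) − P(Y=0). -/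
/-!
Write `e_k(s)` for the elementary symmetric sums of the weights on `s` and
`F i = ∑_k (k+1)! e_k(univ \ {i})`, so that Method 2 gives colour `i` the mass `p i ^ 2 * F i`.

When `∑ p = 1`, splitting `e_{k+1}` according to whether it contains `i` gives
`∑ i, p i ^ 2 e_k(univ \ {i}) = e_{k+1} - (k+2) e_{k+2}`, so `∑ i, p i ^ 2 * F i` telescopes to
`e_1 = 1`. Moreover `F` is antitone in the weight: exchanging the roles of `a` and `b` changes each
`e_k` by `(p a - p b) e_{k-1}` of the remaining weights. Hence for a colour `i` of minimal weight
`1 = ∑ j, p j ^ 2 F j ≤ (∑ j, p j ^ 2) F i`, i.e. Method 1 gives `i` at most its Method 2 mass.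
In the family `(x, q, …, q)` with `q = (1 - x) / n ≤ x` only colour `0` is not minimal, and as
both laws have total mass one, the total variation distance is the excess of Method 1 at
colour `0`.
-/

open Finset
open scoped Nat

namespace Collision

variable {ι : Type*} (p : ι → ℝ)

def esymmOn (s : Finset ι) (k : ℕ) : ℝ := ∑ J ∈ powersetCard k s, ∏ l ∈ J, p l

@[simp] lemma esymmOn_zero (s : Finset ι) : esymmOn p s 0 = 1 := by simp [esymmOn]

lemma esymmOn_one (s : Finset ι) : esymmOn p s 1 = ∑ i ∈ s, p i := by
  simp [esymmOn, powersetCard_one]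

lemma esymmOn_eq_zero_of_card_lt {s : Finset ι} {k : ℕ} (h : #s < k) : esymmOn p s k = 0 := by
  simp [esymmOn, powersetCard_eq_empty.2 h]

lemma esymmOn_nonneg (hp : ∀ i, 0 ≤ p i) (s : Finset ι) (k : ℕ) : 0 ≤ esymmOn p s k :=
  sum_nonneg fun _ _ ↦ prod_nonneg fun l _ ↦ hp l

lemma esymmOn_of_eq_const {s : Finset ι} {c : ℝ} (h : ∀ l ∈ s, p l = c) (k : ℕ) :
    esymmOn p s k = (#s).choose k * c ^ k := by
  rw [esymmOn, sum_congr rfl fun J hJ ↦ ?_, sum_const, card_powersetCard, nsmul_eq_mul]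
  obtain ⟨hJs, rfl⟩ := mem_powersetCard.1 hJ
  rw [prod_congr rfl fun l hl ↦ h l (hJs hl), prod_const]

section Fintype

variable [Fintype ι]

lemma half_sum_abs_sub_eq [DecidableEq ι] {a b : ι → ℝ}
    (hab : ∑ i, a i = ∑ i, b i) {i₀ : ι} (h : ∀ i ≠ i₀, a i ≤ b i) :
    1 / 2 * ∑ i, |a i - b i| = a i₀ - b i₀ := by
  have hrest : ∑ i ∈ univ.erase i₀, |a i - b i| = ∑ i ∈ univ.erase i₀, (b i - a i) :=
    sum_congr rfl fun i hi ↦ by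
      rw [abs_sub_comm, abs_of_nonneg (sub_nonneg.2 (h i (ne_of_mem_erase hi)))]
  have hsplit : a i₀ - b i₀ = ∑ i ∈ univ.erase i₀, (b i - a i) := by
    rw [sum_sub_distrib]
    linarith [add_sum_erase univ a (mem_univ i₀), add_sum_erase univ b (mem_univ i₀)]
  have h0 : 0 ≤ a i₀ - b i₀ :=
    hsplit ▸ sum_nonneg fun i hi ↦ sub_nonneg.2 (h i (ne_of_mem_erase hi))
  rw [← add_sum_erase _ _ (mem_univ i₀), hrest, ← hsplit, abs_of_nonneg h0]
  ring

-- Method 1: the colour of two independent draws from `p`, conditioned on the draws agreeing.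
noncomputable def condCollisionProb (i : ι) : ℝ := p i ^ 2 / ∑ j, p j ^ 2

lemma sum_condCollisionProb (hp : ∑ j, p j ^ 2 ≠ 0) : ∑ i, condCollisionProb p i = 1 := by
  simp only [condCollisionProb]
  rw [← sum_div, div_self hp]

lemma sum_sq_ne_zero_of_sum_eq_one (hp1 : ∑ i, p i = 1) : ∑ i, p i ^ 2 ≠ 0 := by
  intro h
  have hzero : ∀ i, p i = 0 := fun i ↦
    pow_eq_zero_iff two_ne_zero |>.1 <|
      (sum_eq_zero_iff_of_nonneg fun j _ ↦ sq_nonneg (p j)).1 h i (mem_univ i)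
  simp [hzero] at hp1

end Fintype

section DecidableEq

variable [DecidableEq ι]

lemma esymmOn_insert {a : ι} {s : Finset ι} (ha : a ∉ s) (k : ℕ) :
    esymmOn p (insert a s) (k + 1) = esymmOn p s (k + 1) + p a * esymmOn p s k := by
  rw [esymmOn, powersetCard_succ_insert ha, sum_union, sum_image, esymmOn, esymmOn, mul_sum]
  · refine congrArg _ (sum_congr rfl fun J hJ ↦ prod_insert fun haJ ↦ ha ?_)
    exact (mem_powersetCard.1 hJ).1 haJ
  · intro J hJ K hK hJK
    have hJa : a ∉ J := fun h ↦ ha ((mem_powersetCard.1 hJ).1 h)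
    have hKa : a ∉ K := fun h ↦ ha ((mem_powersetCard.1 hK).1 h)
    rw [← erase_insert hJa, hJK, erase_insert hKa]
  · refine disjoint_left.2 fun J hJ hJ' ↦ ?_
    obtain ⟨K, -, rfl⟩ := mem_image.1 hJ'
    exact ha ((mem_powersetCard.1 hJ).1 (mem_insert_self a K))

lemma esymmOn_erase_add {a : ι} {s : Finset ι} (ha : a ∈ s) (k : ℕ) :
    esymmOn p s (k + 1) = esymmOn p (s.erase a) (k + 1) + p a * esymmOn p (s.erase a) k := by
  conv_lhs => rw [← insert_erase ha]
  exact esymmOn_insert p (notMem_erase a s) k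

lemma mul_esymmOn_erase {i : ι} {s : Finset ι} (hi : i ∈ s) (k : ℕ) :
    p i * esymmOn p (s.erase i) k = ∑ K ∈ powersetCard (k + 1) s with i ∈ K, ∏ l ∈ K, p l := by
  have hiJ : ∀ J ∈ powersetCard k (s.erase i), i ∉ J :=
    fun J hJ h ↦ notMem_erase i s ((mem_powersetCard.1 hJ).1 h)
  rw [esymmOn, mul_sum]
  refine sum_nbij' (insert i) (fun K ↦ K.erase i) (fun J hJ ↦ ?_) (fun K hK ↦ ?_)
    (fun J hJ ↦ erase_insert (hiJ J hJ)) (fun K hK ↦ insert_erase (mem_filter.1 hK).2)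
    (fun J hJ ↦ (prod_insert (hiJ J hJ)).symm)
  · obtain ⟨hJs, hJk⟩ := mem_powersetCard.1 hJ
    refine mem_filter.2 ⟨mem_powersetCard.2 ⟨?_, ?_⟩, mem_insert_self i J⟩
    · exact insert_subset hi (hJs.trans (erase_subset i s))
    · rw [card_insert_of_notMem (hiJ J hJ), hJk]
  · obtain ⟨hK, hiK⟩ := mem_filter.1 hK
    obtain ⟨hKs, hKk⟩ := mem_powersetCard.1 hK
    refine mem_powersetCard.2 ⟨erase_subset_erase i hKs, ?_⟩
    rw [card_erase_of_mem hiK, hKk, Nat.add_sub_cancel]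

lemma sum_mul_esymmOn_erase (s : Finset ι) (k : ℕ) :
    ∑ i ∈ s, p i * esymmOn p (s.erase i) k = (k + 1) * esymmOn p s (k + 1) := by
  calc ∑ i ∈ s, p i * esymmOn p (s.erase i) k
      = ∑ i ∈ s, ∑ K ∈ powersetCard (k + 1) s with i ∈ K, ∏ l ∈ K, p l :=
        sum_congr rfl fun i hi ↦ mul_esymmOn_erase p hi k
    _ = ∑ K ∈ powersetCard (k + 1) s, ∑ i ∈ K, ∏ l ∈ K, p l := by
        refine sum_comm' fun i K ↦ ?_
        simp only [mem_filter, mem_powersetCard]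
        exact ⟨fun ⟨_, ⟨hK, hc⟩, hiK⟩ ↦ ⟨hiK, hK, hc⟩, fun ⟨hiK, hK, hc⟩ ↦ ⟨hK hiK, ⟨hK, hc⟩, hiK⟩⟩
    _ = (k + 1) * esymmOn p s (k + 1) := by
        rw [esymmOn, mul_sum]
        refine sum_congr rfl fun K hK ↦ ?_
        rw [sum_const, (mem_powersetCard.1 hK).2, nsmul_eq_mul]
        push_cast; ring

lemma sum_sq_mul_esymmOn_erase {s : Finset ι} (hs : ∑ i ∈ s, p i = 1) (k : ℕ) :
    ∑ i ∈ s, p i ^ 2 * esymmOn p (s.erase i) k =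
      esymmOn p s (k + 1) - (k + 2) * esymmOn p s (k + 2) := by
  calc ∑ i ∈ s, p i ^ 2 * esymmOn p (s.erase i) k
      = ∑ i ∈ s, (p i * esymmOn p s (k + 1) - p i * esymmOn p (s.erase i) (k + 1)) := by
        refine sum_congr rfl fun i hi ↦ ?_
        rw [esymmOn_erase_add p hi k]
        ring
    _ = (∑ i ∈ s, p i) * esymmOn p s (k + 1) - (k + 1 + 1) * esymmOn p s (k + 2) := by
        rw [sum_sub_distrib, ← sum_mul, sum_mul_esymmOn_erase]
        push_cast
        ring
    _ = esymmOn p s (k + 1) - (k + 2) * esymmOn p s (k + 2) := by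
        rw [hs]
        ring

lemma esymmOn_insert_le_insert (hp : ∀ i, 0 ≤ p i) {a b : ι} {s : Finset ι} (ha : a ∉ s)
    (hb : b ∉ s) (hab : p b ≤ p a) (k : ℕ) :
    esymmOn p (insert b s) k ≤ esymmOn p (insert a s) k := by
  cases k with
  | zero => simp
  | succ k =>
    rw [esymmOn_insert p ha, esymmOn_insert p hb]
    have := esymmOn_nonneg p hp s k
    gcongr

lemma esymmOn_erase_le_erase (hp : ∀ i, 0 ≤ p i) {a b : ι} {s : Finset ι} (ha : a ∈ s)
    (hb : b ∈ s) (hab : p b ≤ p a) (k : ℕ) :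
    esymmOn p (s.erase a) k ≤ esymmOn p (s.erase b) k := by
  obtain rfl | hne := eq_or_ne a b
  · exact le_rfl
  have hb' : b ∈ s.erase a := mem_erase.2 ⟨hne.symm, hb⟩
  have ha' : a ∈ s.erase b := mem_erase.2 ⟨hne, ha⟩
  rw [← insert_erase hb', ← insert_erase ha', erase_right_comm]
  exact esymmOn_insert_le_insert p hp (notMem_erase a _) (by simp) hab k

variable [Fintype ι]

/- Method 2: the first colour to be drawn twice in a sequence of independent draws from `p` is `i`
with probability `firstRepeatProb p i`; the draws before the repeat form `J ∪ {i}` in some order. -/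
def repeatFactor (i : ι) : ℝ :=
  ∑ k ∈ range (Fintype.card ι), (k + 1)! * esymmOn p (univ.erase i) k

def firstRepeatProb (i : ι) : ℝ := p i ^ 2 * repeatFactor p i

lemma sum_firstRepeatProb (hp : ∑ i, p i = 1) : ∑ i, firstRepeatProb p i = 1 := by
  set f : ℕ → ℝ := fun k ↦ (k + 1)! * esymmOn p univ (k + 1)
  calc ∑ i, firstRepeatProb p i
      = ∑ k ∈ range (Fintype.card ι), (k + 1)! * ∑ i, p i ^ 2 * esymmOn p (univ.erase i) k := by
        simp only [firstRepeatProb, repeatFactor, mul_sum]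
        rw [sum_comm]
        exact sum_congr rfl fun k _ ↦ sum_congr rfl fun i _ ↦ by ring
    _ = ∑ k ∈ range (Fintype.card ι), (f k - f (k + 1)) := by
        refine sum_congr rfl fun k _ ↦ ?_
        simp only [f]
        rw [sum_sq_mul_esymmOn_erase p hp, Nat.factorial_succ (k + 1)]
        push_cast
        ring
    _ = 1 := by
        rw [sum_range_sub', show f 0 = ∑ i, p i by simp [f, esymmOn_one], hp,
          show f (Fintype.card ι) = 0 by
            simp only [f]
            rw [esymmOn_eq_zero_of_card_lt p (by rw [card_univ]; omega), mul_zero]]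
        ring

lemma repeatFactor_anti (hp : ∀ i, 0 ≤ p i) {a b : ι} (hab : p b ≤ p a) :
    repeatFactor p a ≤ repeatFactor p b :=
  sum_le_sum fun k _ ↦ mul_le_mul_of_nonneg_left
    (esymmOn_erase_le_erase p hp (mem_univ a) (mem_univ b) hab k) (by positivity)

lemma condCollisionProb_le_firstRepeatProb (hp : ∀ i, 0 ≤ p i)
    (hp1 : ∑ i, p i = 1) {i : ι} (hmin : ∀ j, p i ≤ p j) :
    condCollisionProb p i ≤ firstRepeatProb p i := by
  have key : 1 ≤ (∑ j, p j ^ 2) * repeatFactor p i :=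
    calc (1 : ℝ) = ∑ j, p j ^ 2 * repeatFactor p j := (sum_firstRepeatProb p hp1).symm
      _ ≤ ∑ j, p j ^ 2 * repeatFactor p i :=
        sum_le_sum fun j _ ↦ mul_le_mul_of_nonneg_left (repeatFactor_anti p hp (hmin j))
          (sq_nonneg _)
      _ = (∑ j, p j ^ 2) * repeatFactor p i := (sum_mul ..).symm
  have hS : 0 < ∑ j, p j ^ 2 := by
    refine lt_of_le_of_ne (by positivity) fun h ↦ ?_
    rw [← h, zero_mul] at key
    linarith
  rw [condCollisionProb, firstRepeatProb, div_le_iff₀ hS, mul_assoc]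
  exact le_mul_of_one_le_right (sq_nonneg _) (by linarith)

lemma half_sum_abs_condCollisionProb_sub_firstRepeatProb (hp : ∀ i, 0 ≤ p i)
    (hp1 : ∑ i, p i = 1) {i₀ : ι} (hmin : ∀ i ≠ i₀, ∀ j, p i ≤ p j) :
    1 / 2 * ∑ i, |condCollisionProb p i - firstRepeatProb p i| =
      condCollisionProb p i₀ - firstRepeatProb p i₀ :=
  half_sum_abs_sub_eq
    ((sum_condCollisionProb p (sum_sq_ne_zero_of_sum_eq_one p hp1)).trans
      (sum_firstRepeatProb p hp1).symm)
    fun i hi ↦ condCollisionProb_le_firstRepeatProb p hp hp1 (hmin i hi)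

end DecidableEq

lemma sum_univ_succ_of_forall_ne_zero {n : ℕ} (f : Fin (n + 1) → ℝ) {c : ℝ}
    (h : ∀ i ≠ 0, f i = c) : ∑ i, f i = f 0 + n * c := by
  simp [Fin.sum_univ_succ, h _ (Fin.succ_ne_zero _)]

lemma half_sum_abs_sub_of_forall_ne_zero_eq {n : ℕ} {p : Fin (n + 1) → ℝ} {q : ℝ}
    (hpq : ∀ i ≠ 0, p i = q) (hq : 0 ≤ q) (hq_le : q ≤ p 0) (hsum : p 0 + n * q = 1) :
    1 / 2 * ∑ i, |condCollisionProb p i - firstRepeatProb p i| =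
      p 0 ^ 2 / (p 0 ^ 2 + n * q ^ 2) -
        p 0 ^ 2 * ∑ k ∈ range (n + 1), ((k + 1)! : ℝ) * n.choose k * q ^ k := by
  have hp_ge (j) : q ≤ p j := by
    rcases eq_or_ne j 0 with rfl | hj
    exacts [hq_le, (hpq j hj).ge]
  rw [half_sum_abs_condCollisionProb_sub_firstRepeatProb p (fun j ↦ hq.trans (hp_ge j))
      (by rwa [sum_univ_succ_of_forall_ne_zero p hpq]) fun i hi j ↦ hpq i hi ▸ hp_ge j,
    condCollisionProb, firstRepeatProb, repeatFactor, Fintype.card_fin,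
    sum_univ_succ_of_forall_ne_zero (p · ^ 2) fun i hi ↦ by rw [hpq i hi]]
  congr 2
  refine sum_congr rfl fun k _ ↦ ?_
  rw [esymmOn_of_eq_const p fun l hl ↦ hpq l (ne_of_mem_erase hl), card_erase_of_mem (mem_univ _),
    card_univ, Fintype.card_fin, Nat.add_sub_cancel, mul_assoc]

end Collision

open Collision

theorem stmt_12_general (n : ℕ) (x : ℝ)
    (hx : x ∈ Set.Ioo (1 / (n + 1) : ℝ) 1)
    (p : Fin (n + 1) → ℝ) (hp : ∀ i, p i = if i = 0 then x else (1 - x) / n) :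
    (1 / 2) * ∑ i, |p i ^ 2 / (∑ j, p j ^ 2) -
        p i ^ 2 * ∑ k ∈ Finset.range (n + 1), (Nat.factorial (k + 1) : ℝ) *
          ∑ J ∈ Finset.powersetCard k (Finset.univ.erase i), ∏ l ∈ J, p l| =
      x ^ 2 / (x ^ 2 + (1 - x) ^ 2 / n) -
        x ^ 2 * ∑ k ∈ Finset.range (n + 1),
          (Nat.factorial (k + 1) : ℝ) * (n.choose k) * ((1 - x) / n) ^ k := by
  obtain ⟨hx_gt, hx_lt⟩ := hx
  have hn : (0 : ℝ) < n :=
    Nat.cast_pos.2 (Nat.pos_of_ne_zero (by rintro rfl; norm_num at hx_gt; linarith))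
  have hp0 : p 0 = x := by simp [hp]
  have hpq : ∀ i ≠ 0, p i = (1 - x) / n := fun i hi ↦ by simp [hp, hi]
  have hq_le : (1 - x) / n ≤ p 0 := by
    rw [div_lt_iff₀ (by positivity)] at hx_gt
    rw [hp0, div_le_iff₀ hn]
    nlinarith
  have hX (i) : p i ^ 2 / ∑ j, p j ^ 2 = condCollisionProb p i := rfl
  have hY (i) : p i ^ 2 * ∑ k ∈ range (n + 1), ((k + 1)! : ℝ) *
      ∑ J ∈ powersetCard k (univ.erase i), ∏ l ∈ J, p l = firstRepeatProb p i := by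
    simp [firstRepeatProb, repeatFactor, esymmOn]
  simp only [hX, hY]
  rw [half_sum_abs_sub_of_forall_ne_zero_eq hpq (div_nonneg (by linarith) hn.le) hq_le
    (by rw [hp0]; field_simp; ring), hp0]
  field_simp

theorem stmt_12 (n : ℕ) (hn : 1 ≤ n) (x : ℝ)
    (hx : x ∈ Set.Ioo (1 / (n + 1) : ℝ) 1)
    (p : Fin (n + 1) → ℝ) (hp : ∀ i, p i = if i = 0 then x else (1 - x) / n) :
    (1 / 2) * ∑ i, |p i ^ 2 / (∑ j, p j ^ 2) -
        p i ^ 2 * ∑ k ∈ Finset.range (n + 1), (Nat.factorial (k + 1) : ℝ) *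
          ∑ J ∈ Finset.powersetCard k (Finset.univ.erase i), ∏ l ∈ J, p l| =
      x ^ 2 / (x ^ 2 + (1 - x) ^ 2 / n) -
        x ^ 2 * ∑ k ∈ Finset.range (n + 1),
          (Nat.factorial (k + 1) : ℝ) * (n.choose k) * ((1 - x) / n) ^ k :=
  stmt_12_general n x hx p hp
end

section
/- For each c ∈ (0,∞), the limit as n → ∞ of the discrepancy D(p(n, c/√n)) equals ℓ(c) = c²/(1+c²) − ∫₀^∞ c² t e^{−ct − t²/2} dt, where p(n,x) = (x, (1−x)/n, ..., (1−x)/n). -/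
/-!
Writing `(k + 1)! = ∫₀^∞ u^(k+1) e^(-u) du` turns the Method 2 probability of colour `i` into
`p i ^ 2 * ∫₀^∞ u e^(-u) ∏_{l ≠ i} (1 + p l u) du`; these sum to `1` because, when `∑ p = 1`,
their integrands add up to the derivative of `-e^(-u) ∏_l (1 + p l u)`.

For `p(n, x)` all colours but the first have the same weight, so the discrepancy is
`|P₁(0) - P₂(0)|`. With `x = c/√n`, `P₁(0) = c²/(c² + (1 - x)²) → c²/(1 + c²)`, and after the
substitution `u = √n v`, `P₂(0) = c² ∫₀^∞ v e^(-√n v) (1 + (1 - x) v/√n)^n dv`. A second-order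
expansion of `log` sends the integrand to `v e^(-cv - v²/2)`, and `v e^(-cv)` dominates it.
The limit is nonnegative because
`(1 + c²) ∫ v e^(-cv - v²/2) ≤ ∫ v (1 + c² + cv) e^(-cv - v²/2) = 1`.
-/

open MeasureTheory Real Filter Set Finset Topology
open scoped Nat

section ElementarySymmetric

variable {ι : Type*}

theorem prod_one_add_mul_eq_sum_powersetCard (s : Finset ι) (f : ι → ℝ) (u : ℝ) :
    ∏ l ∈ s, (1 + f l * u) =
      ∑ k ∈ range (#s + 1), (∑ J ∈ s.powersetCard k, ∏ l ∈ J, f l) * u ^ k := by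
  rw [prod_one_add, sum_powerset]
  refine sum_congr rfl fun k _ => ?_
  rw [sum_mul]
  refine sum_congr rfl fun J hJ => ?_
  rw [prod_mul_distrib, prod_const, (mem_powersetCard.1 hJ).2]

theorem integrableOn_pow_mul_exp_neg (m : ℕ) :
    IntegrableOn (fun u : ℝ => u ^ m * exp (-u)) (Ioi 0) := by
  refine (GammaIntegral_convergent (s := m + 1) (by positivity)).congr_fun
    (fun u _ => ?_) measurableSet_Ioi
  simp [mul_comm]

theorem integral_pow_mul_exp_neg (m : ℕ) : ∫ u in Ioi (0 : ℝ), u ^ m * exp (-u) = m ! := by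
  rw [← Gamma_nat_eq_factorial, Gamma_eq_integral (by positivity)]
  refine setIntegral_congr_fun measurableSet_Ioi fun u _ => ?_
  simp [mul_comm]

theorem mul_exp_neg_mul_prod_eq_sum (s : Finset ι) (f : ι → ℝ) (u : ℝ) :
    u * exp (-u) * ∏ l ∈ s, (1 + f l * u) =
      ∑ k ∈ range (#s + 1),
        (∑ J ∈ s.powersetCard k, ∏ l ∈ J, f l) * (u ^ (k + 1) * exp (-u)) := by
  rw [prod_one_add_mul_eq_sum_powersetCard, mul_sum]
  exact sum_congr rfl fun k _ => by ring

theorem integrableOn_mul_exp_neg_mul_prod (s : Finset ι) (f : ι → ℝ) :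
    IntegrableOn (fun u : ℝ => u * exp (-u) * ∏ l ∈ s, (1 + f l * u)) (Ioi 0) := by
  simp_rw [mul_exp_neg_mul_prod_eq_sum]
  exact integrable_finsetSum _ fun k _ => (integrableOn_pow_mul_exp_neg (k + 1)).const_mul _

theorem integral_mul_exp_neg_mul_prod (s : Finset ι) (f : ι → ℝ) :
    ∫ u in Ioi (0 : ℝ), u * exp (-u) * ∏ l ∈ s, (1 + f l * u) =
      ∑ k ∈ range (#s + 1), ((k + 1)! : ℝ) * ∑ J ∈ s.powersetCard k, ∏ l ∈ J, f l := by
  simp_rw [mul_exp_neg_mul_prod_eq_sum]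
  rw [integral_finsetSum _ fun k _ => (integrableOn_pow_mul_exp_neg (k + 1)).const_mul _]
  refine sum_congr rfl fun k _ => ?_
  rw [integral_const_mul, integral_pow_mul_exp_neg, mul_comm]

theorem tendsto_exp_neg_mul_prod_atTop (s : Finset ι) (f : ι → ℝ) :
    Tendsto (fun u : ℝ => exp (-u) * ∏ l ∈ s, (1 + f l * u)) atTop (𝓝 0) := by
  simp_rw [prod_one_add_mul_eq_sum_powersetCard, mul_sum]
  rw [← sum_const_zero (s := range (#s + 1))]
  refine tendsto_finsetSum _ fun k _ => ?_
  have := (tendsto_pow_mul_exp_neg_atTop_nhds_zero k).const_mul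
    (∑ J ∈ s.powersetCard k, ∏ l ∈ J, f l)
  rw [mul_zero] at this
  exact this.congr fun u => by ring

end ElementarySymmetric

section Distributions

variable {ι : Type*} [Fintype ι]

noncomputable def squareProb (p : ι → ℝ) (i : ι) : ℝ := p i ^ 2 / ∑ j, p j ^ 2

theorem sum_squareProb {p : ι → ℝ} (hp : ∑ j, p j ^ 2 ≠ 0) : ∑ i, squareProb p i = 1 := by
  simp only [squareProb]
  rw [← sum_div, div_self hp]

variable [DecidableEq ι]

/-- The first `k + 1` draws are the distinct colours `J ∪ {i}`, in any of `(k + 1)!` orders,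
and draw `k + 2` repeats `i`. -/
noncomputable def firstRepeatProb (p : ι → ℝ) (i : ι) : ℝ :=
  p i ^ 2 * ∑ k ∈ range (Fintype.card ι),
    ((k + 1)! : ℝ) * ∑ J ∈ (univ.erase i).powersetCard k, ∏ l ∈ J, p l

theorem firstRepeatProb_eq_integral (p : ι → ℝ) (i : ι) :
    firstRepeatProb p i =
      p i ^ 2 * ∫ u in Ioi (0 : ℝ), u * exp (-u) * ∏ l ∈ univ.erase i, (1 + p l * u) := by
  rw [integral_mul_exp_neg_mul_prod, card_erase_of_mem (mem_univ i), card_univ,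
    Nat.sub_add_cancel (Fintype.card_pos_iff.2 ⟨i⟩)]
  rfl

theorem hasDerivAt_neg_exp_neg_mul_prod {p : ι → ℝ} (hp : ∑ i, p i = 1) (u : ℝ) :
    HasDerivAt (fun u => -(exp (-u) * ∏ l, (1 + p l * u)))
      (∑ i, p i ^ 2 * (u * exp (-u) * ∏ l ∈ univ.erase i, (1 + p l * u))) u := by
  have hprod : HasDerivAt (fun u => ∏ l, (1 + p l * u))
      (∑ i, (∏ l ∈ univ.erase i, (1 + p l * u)) • p i) u :=
    HasDerivAt.fun_finsetProd fun l _ => by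
      simpa using ((hasDerivAt_id u).const_mul (p l)).const_add 1
  -- `∑ p = 1` splits the full product as `∑ i, p i (1 + p i u) ∏_{l ≠ i} (1 + p l u)`.
  have hsplit : ∏ l, (1 + p l * u) =
      ∑ i, p i * ((1 + p i * u) * ∏ l ∈ univ.erase i, (1 + p l * u)) := by
    simp_rw [mul_prod_erase univ (fun l => 1 + p l * u) (mem_univ _)]
    rw [← sum_mul, hp, one_mul]
  refine ((hasDerivAt_neg u).exp.mul hprod).neg.congr_deriv ?_
  rw [hsplit]
  simp only [smul_eq_mul, mul_sum, ← sum_neg_distrib, ← sum_add_distrib]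
  exact sum_congr rfl fun i _ => by ring

theorem sum_firstRepeatProb {p : ι → ℝ} (hp0 : ∀ i, 0 ≤ p i) (hp : ∑ i, p i = 1) :
    ∑ i, firstRepeatProb p i = 1 := by
  have hderiv_nonneg : ∀ u ∈ Ioi (0 : ℝ),
      0 ≤ ∑ i, p i ^ 2 * (u * exp (-u) * ∏ l ∈ univ.erase i, (1 + p l * u)) :=
    fun u hu => sum_nonneg fun i _ =>
      have hu : (0 : ℝ) < u := hu
      mul_nonneg (sq_nonneg _) <| mul_nonneg (by positivity) <|
        prod_nonneg fun l _ => by nlinarith [hp0 l]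
  have hlim := (tendsto_exp_neg_mul_prod_atTop univ p).neg
  rw [neg_zero] at hlim
  have hFTC := integral_Ioi_of_hasDerivAt_of_nonneg'
    (fun u _ => hasDerivAt_neg_exp_neg_mul_prod hp u) hderiv_nonneg hlim
  simp_rw [firstRepeatProb_eq_integral, ← integral_const_mul]
  rw [← integral_finsetSum _ fun i _ => (integrableOn_mul_exp_neg_mul_prod _ p).const_mul _, hFTC]
  simp

theorem prod_erase_eq_of_apply_eq {M : Type*} [CommMonoid M] {f : ι → M} {i j : ι}
    (h : f i = f j) : ∏ l ∈ univ.erase i, f l = ∏ l ∈ univ.erase j, f l := by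
  refine prod_equiv (Equiv.swap i j) (fun l => ?_) (fun l hl => ?_)
  · simp [Equiv.swap_apply_eq_iff]
  · rcases eq_or_ne l j with rfl | hlj
    · simp [h]
    · rw [Equiv.swap_apply_of_ne_of_ne (ne_of_mem_erase hl) hlj]

theorem firstRepeatProb_eq_of_apply_eq (p : ι → ℝ) {i j : ι} (h : p i = p j) :
    firstRepeatProb p i = firstRepeatProb p j := by
  rw [firstRepeatProb_eq_integral, firstRepeatProb_eq_integral, h]
  congr 2 with u
  rw [prod_erase_eq_of_apply_eq (f := fun l => 1 + p l * u) (i := i) (j := j) (by rw [h])]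

theorem sum_abs_eq_two_mul_abs_of_sum_eq_zero {d : ι → ℝ} {i₀ : ι} (hd : ∑ i, d i = 0)
    (hconst : ∀ i ≠ i₀, ∀ j ≠ i₀, d i = d j) : ∑ i, |d i| = 2 * |d i₀| := by
  have hrest : ∑ i ∈ univ.erase i₀, |d i| = |∑ i ∈ univ.erase i₀, d i| := by
    rcases (univ.erase i₀).eq_empty_or_nonempty with h | ⟨j, hj⟩
    · simp [h]
    · have hdj : ∀ i ∈ univ.erase i₀, d i = d j := fun i hi =>
        hconst i (ne_of_mem_erase hi) j (ne_of_mem_erase hj)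
      rw [sum_congr rfl hdj, sum_congr rfl fun i hi => congrArg abs (hdj i hi), sum_const,
        sum_const, nsmul_eq_mul, nsmul_eq_mul, abs_mul, Nat.abs_cast]
  rw [← add_sum_erase _ _ (mem_univ i₀)] at hd ⊢
  rw [hrest, eq_neg_of_add_eq_zero_right hd, abs_neg]
  ring

theorem half_sum_abs_squareProb_sub_firstRepeatProb {p : ι → ℝ} (hp0 : ∀ i, 0 ≤ p i)
    (hp : ∑ i, p i = 1) {i₀ : ι} (hconst : ∀ i ≠ i₀, ∀ j ≠ i₀, p i = p j) :
    (1 / 2) * ∑ i, |squareProb p i - firstRepeatProb p i| =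
      |squareProb p i₀ - firstRepeatProb p i₀| := by
  have hsq : ∑ j, p j ^ 2 ≠ 0 := by
    obtain ⟨j, -, hj⟩ := exists_ne_zero_of_sum_ne_zero (hp.trans_ne one_ne_zero)
    exact (sum_pos' (fun j _ => sq_nonneg (p j)) ⟨j, mem_univ j, by positivity⟩).ne'
  rw [sum_abs_eq_two_mul_abs_of_sum_eq_zero (i₀ := i₀)]
  · ring
  · rw [sum_sub_distrib, sum_squareProb hsq, sum_firstRepeatProb hp0 hp, sub_self]
  · intro i hi j hj
    rw [squareProb, squareProb, hconst i hi j hj,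
      firstRepeatProb_eq_of_apply_eq p (hconst i hi j hj)]

end Distributions

theorem tendsto_sqrt_natCast_atTop : Tendsto (fun n : ℕ => √(n : ℝ)) atTop atTop :=
  tendsto_sqrt_atTop.comp tendsto_natCast_atTop_atTop

theorem abs_log_one_add_sub_le {z : ℝ} (hz : |z| ≤ 1 / 2) :
    |log (1 + z) - (z - z ^ 2 / 2)| ≤ 2 * |z| ^ 3 := by
  have h := abs_log_sub_add_sum_range_le (x := -z) (by rw [abs_neg]; linarith) 2
  simp only [sum_range_succ, sum_range_zero, abs_neg, sub_neg_eq_add] at h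
  norm_num at h
  calc |log (1 + z) - (z - z ^ 2 / 2)| = |-z + z ^ 2 / 2 + log (1 + z)| := by ring_nf
    _ ≤ |z| ^ 3 / (1 - |z|) := h
    _ ≤ 2 * |z| ^ 3 := by
      rw [div_le_iff₀ (by linarith)]
      nlinarith [pow_nonneg (abs_nonneg z) 3]

theorem tendsto_one_sub_div_atTop (c : ℝ) : Tendsto (fun s : ℝ => 1 - c / s) atTop (𝓝 1) := by
  simpa using (tendsto_const_nhds (x := (1 : ℝ))).sub (tendsto_const_nhds.div_atTop tendsto_id)

theorem tendsto_one_sub_div_div_mul_atTop (c v : ℝ) :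
    Tendsto (fun s : ℝ => (1 - c / s) / s * v) atTop (𝓝 0) := by
  simpa using ((tendsto_one_sub_div_atTop c).div_atTop tendsto_id).mul_const v

theorem tendsto_sq_mul_log_one_add_sub (c v : ℝ) :
    Tendsto (fun s : ℝ => s ^ 2 * log (1 + (1 - c / s) / s * v) - s * v) atTop
      (𝓝 (-c * v - v ^ 2 / 2)) := by
  set z : ℝ → ℝ := fun s => (1 - c / s) / s * v
  have hcs := tendsto_one_sub_div_atTop c
  have hz : ∀ᶠ s in atTop, |z s| ≤ 1 / 2 := by
    have := (tendsto_one_sub_div_div_mul_atTop c v).abs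
    rw [abs_zero] at this
    exact this.eventually (ge_mem_nhds (by norm_num))
  have hremainder : Tendsto (fun s => s ^ 2 * (log (1 + z s) - (z s - z s ^ 2 / 2))) atTop
      (𝓝 0) := by
    have hbound : Tendsto (fun s : ℝ => 2 * |1 - c / s| ^ 3 * |v| ^ 3 / s) atTop (𝓝 0) :=
      (((hcs.abs.pow 3).const_mul 2).mul_const _).div_atTop tendsto_id
    refine squeeze_zero_norm' ?_ hbound
    filter_upwards [hz, eventually_gt_atTop 0] with s hzs hs
    rw [norm_mul, norm_pow, Real.norm_eq_abs, Real.norm_eq_abs, abs_of_pos hs]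
    calc s ^ 2 * |log (1 + z s) - (z s - z s ^ 2 / 2)| ≤ s ^ 2 * (2 * |z s| ^ 3) :=
          mul_le_mul_of_nonneg_left (abs_log_one_add_sub_le hzs) (by positivity)
      _ = 2 * |1 - c / s| ^ 3 * |v| ^ 3 / s := by
          simp only [z, abs_mul, abs_div, abs_of_pos hs]
          field_simp
  have hquadratic : Tendsto (fun s : ℝ => -c * v - (1 - c / s) ^ 2 * (v ^ 2 / 2)) atTop
      (𝓝 (-c * v - v ^ 2 / 2)) := by
    simpa using ((hcs.pow 2).mul_const (v ^ 2 / 2)).const_sub (-c * v)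
  have hsum := hremainder.add hquadratic
  rw [zero_add] at hsum
  refine hsum.congr' ?_
  filter_upwards [eventually_gt_atTop 0] with s hs
  simp only [z]
  field_simp
  ring

noncomputable def spikeIntegrand (c : ℝ) (n : ℕ) (v : ℝ) : ℝ :=
  v * exp (-(√n * v)) * (1 + (1 - c / √n) / √n * v) ^ n

theorem tendsto_spikeIntegrand (c v : ℝ) :
    Tendsto (fun n : ℕ => spikeIntegrand c n v) atTop (𝓝 (v * exp (-c * v - v ^ 2 / 2))) := by
  have hpos : ∀ᶠ n : ℕ in atTop, 0 < 1 + (1 - c / √n) / √n * v := by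
    have := ((tendsto_one_sub_div_div_mul_atTop c v).comp tendsto_sqrt_natCast_atTop).eventually
      (lt_mem_nhds (by norm_num : (-1 : ℝ) < 0))
    filter_upwards [this] with n hn
    simp only [Function.comp_apply] at hn
    linarith
  refine (((tendsto_sq_mul_log_one_add_sub c v).comp tendsto_sqrt_natCast_atTop).rexp.const_mul
    v).congr' ?_
  filter_upwards [hpos] with n hn
  simp only [Function.comp_apply, spikeIntegrand, sq_sqrt (Nat.cast_nonneg n), exp_sub,
    exp_nat_mul, exp_log hn, exp_neg]
  ring

theorem abs_spikeIntegrand_le {c : ℝ} (hc : 0 < c) {n : ℕ} (hcn : c ≤ √n) {v : ℝ}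
    (hv : 0 ≤ v) : |spikeIntegrand c n v| ≤ v * exp (-(c * v)) := by
  have hs : 0 < √(n : ℝ) := hc.trans_le hcn
  have hz : 0 ≤ (1 - c / √n) / √n * v := by
    have : c / √n ≤ 1 := (div_le_one hs).2 hcn
    have : 0 ≤ 1 - c / √n := by linarith
    positivity
  have hpow : (1 + (1 - c / √n) / √n * v) ^ n ≤ exp ((√n - c) * v) := by
    calc (1 + (1 - c / √n) / √n * v) ^ n ≤ exp ((1 - c / √n) / √n * v) ^ n := by
          gcongr
          linarith [add_one_le_exp ((1 - c / √n) / √n * v)]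
      _ = exp ((√n - c) * v) := by
          rw [← exp_nat_mul]
          congr 1
          field_simp
          rw [sq_sqrt (Nat.cast_nonneg _)]
  rw [abs_of_nonneg (by unfold spikeIntegrand; positivity)]
  calc spikeIntegrand c n v ≤ v * exp (-(√n * v)) * exp ((√n - c) * v) := by
        unfold spikeIntegrand; gcongr
    _ = v * exp (-(c * v)) := by rw [mul_assoc, ← exp_add]; ring_nf

theorem integrableOn_mul_exp_neg_mul {c : ℝ} (hc : 0 < c) :
    IntegrableOn (fun v : ℝ => v * exp (-(c * v))) (Ioi 0) := by
  refine (integrableOn_rpow_mul_exp_neg_mul_rpow (s := 1) (p := 1) (by norm_num) one_pos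
    hc).congr_fun (fun v _ => ?_) measurableSet_Ioi
  simp

theorem tendsto_integral_spikeIntegrand {c : ℝ} (hc : 0 < c) :
    Tendsto (fun n : ℕ => ∫ v in Ioi 0, spikeIntegrand c n v) atTop
      (𝓝 (∫ v in Ioi 0, v * exp (-c * v - v ^ 2 / 2))) := by
  refine tendsto_integral_filter_of_dominated_convergence _
    (Eventually.of_forall fun n => (by unfold spikeIntegrand; fun_prop : Continuous _)
      |>.aestronglyMeasurable) ?_ (integrableOn_mul_exp_neg_mul hc)
    (Eventually.of_forall fun v => tendsto_spikeIntegrand c v)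
  filter_upwards [tendsto_sqrt_natCast_atTop.eventually_ge_atTop c] with n hcn
  filter_upwards [ae_restrict_mem measurableSet_Ioi] with v hv
  exact abs_spikeIntegrand_le hc hcn (le_of_lt hv)

theorem hasDerivAt_neg_one_add_mul_mul_exp (c v : ℝ) :
    HasDerivAt (fun v => -((1 + c * v) * exp (-c * v - v ^ 2 / 2)))
      (v * (1 + c ^ 2 + c * v) * exp (-c * v - v ^ 2 / 2)) v := by
  have hexponent : HasDerivAt (fun v => -c * v - v ^ 2 / 2) (-c - v) v := by
    simpa using ((hasDerivAt_id v).const_mul (-c)).fun_sub ((hasDerivAt_pow 2 v).div_const 2)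
  refine ((((hasDerivAt_id v).const_mul c).const_add 1).mul hexponent.exp).neg.congr_deriv ?_
  simp only [id]
  ring

theorem tendsto_one_add_mul_mul_exp_atTop {c : ℝ} (hc : 0 < c) :
    Tendsto (fun v => (1 + c * v) * exp (-c * v - v ^ 2 / 2)) atTop (𝓝 0) := by
  have hdom : Tendsto (fun v : ℝ => v ^ 0 * exp (-v) + c * (v ^ 1 * exp (-v))) atTop (𝓝 0) := by
    simpa using (tendsto_pow_mul_exp_neg_atTop_nhds_zero 0).add
      ((tendsto_pow_mul_exp_neg_atTop_nhds_zero 1).const_mul c)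
  refine tendsto_of_tendsto_of_tendsto_of_le_of_le' tendsto_const_nhds hdom ?_ ?_
  · filter_upwards [eventually_ge_atTop 0] with v hv
    positivity
  · filter_upwards [eventually_ge_atTop 2] with v hv
    have : exp (-c * v - v ^ 2 / 2) ≤ exp (-v) := exp_le_exp.2 (by nlinarith)
    calc (1 + c * v) * exp (-c * v - v ^ 2 / 2) ≤ (1 + c * v) * exp (-v) := by gcongr
      _ = _ := by ring

theorem integral_mul_exp_neg_mul_sub_sq_le {c : ℝ} (hc : 0 < c) :
    ∫ v in Ioi 0, v * exp (-c * v - v ^ 2 / 2) ≤ 1 / (1 + c ^ 2) := by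
  have hderiv := fun v (_ : v ∈ Ici (0 : ℝ)) => hasDerivAt_neg_one_add_mul_mul_exp c v
  have hnonneg : ∀ v ∈ Ioi (0 : ℝ), 0 ≤ v * (1 + c ^ 2 + c * v) * exp (-c * v - v ^ 2 / 2) :=
    fun v hv => by have : (0 : ℝ) < v := hv; positivity
  have hlim := (tendsto_one_add_mul_mul_exp_atTop hc).neg
  rw [neg_zero] at hlim
  have hFTC := integral_Ioi_of_hasDerivAt_of_nonneg' hderiv hnonneg hlim
  have hle : ∫ v in Ioi 0, (1 + c ^ 2) * (v * exp (-c * v - v ^ 2 / 2)) ≤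
      ∫ v in Ioi 0, v * (1 + c ^ 2 + c * v) * exp (-c * v - v ^ 2 / 2) := by
    refine integral_mono_of_nonneg ?_ (integrableOn_Ioi_deriv_of_nonneg' hderiv hnonneg hlim) ?_
    · filter_upwards [ae_restrict_mem measurableSet_Ioi] with v (hv : 0 < v)
      positivity
    · filter_upwards [ae_restrict_mem measurableSet_Ioi] with v (hv : 0 < v)
      have := exp_pos (-c * v - v ^ 2 / 2)
      nlinarith [mul_pos (mul_pos hc hv) (mul_pos hv this)]
  rw [integral_const_mul, hFTC,
    show (0 : ℝ) - -((1 + c * 0) * exp (-c * 0 - 0 ^ 2 / 2)) = 1 by simp] at hle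
  rw [le_div_iff₀ (by positivity)]
  linarith

/-- The paper's `p(n, x) = (x, (1 - x)/n, …, (1 - x)/n)`. -/
noncomputable def spike (n : ℕ) (x : ℝ) : Fin (n + 1) → ℝ :=
  fun i => if i = 0 then x else (1 - x) / n

section Spike

variable {n : ℕ}

theorem spike_nonneg {x : ℝ} (hx0 : 0 ≤ x) (hx1 : x ≤ 1) (i : Fin (n + 1)) :
    0 ≤ spike n x i := by
  unfold spike
  split_ifs
  · exact hx0
  · exact div_nonneg (by linarith) n.cast_nonneg

theorem sum_spike (hn : n ≠ 0) (x : ℝ) : ∑ i, spike n x i = 1 := by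
  simp only [spike, Fin.sum_univ_succ, ↓reduceIte, Fin.succ_ne_zero, sum_const, card_univ,
    Fintype.card_fin, nsmul_eq_mul]
  field_simp
  ring

theorem spike_eq_of_ne_zero (x : ℝ) {i j : Fin (n + 1)} (hi : i ≠ 0) (hj : j ≠ 0) :
    spike n x i = spike n x j := by
  simp [spike, hi, hj]

theorem squareProb_spike_zero (hn : n ≠ 0) (c : ℝ) :
    squareProb (spike n (c / √n)) 0 = c ^ 2 / (c ^ 2 + (1 - c / √n) ^ 2) := by
  have hs : 0 < √(n : ℝ) := sqrt_pos.2 (by positivity)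
  simp only [squareProb, spike, ↓reduceIte, ite_pow, Fin.sum_univ_succ, Fin.succ_ne_zero,
    sum_const, card_univ, Fintype.card_fin, nsmul_eq_mul]
  field_simp
  rw [sq_sqrt n.cast_nonneg]

theorem firstRepeatProb_spike_zero (hn : n ≠ 0) (c : ℝ) :
    firstRepeatProb (spike n (c / √n)) 0 = c ^ 2 * ∫ v in Ioi 0, spikeIntegrand c n v := by
  have hs : 0 < √(n : ℝ) := sqrt_pos.2 (by positivity)
  have hprod : ∀ u, ∏ l ∈ univ.erase 0, (1 + spike n (c / √n) l * u) =
      (1 + (1 - c / √n) / n * u) ^ n := fun u => by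
    rw [prod_congr rfl fun l hl => by rw [spike, if_neg (ne_of_mem_erase hl)], prod_const,
      card_erase_of_mem (mem_univ _), card_univ, Fintype.card_fin, Nat.add_sub_cancel]
  simp_rw [firstRepeatProb_eq_integral, hprod]
  have hsubst := integral_comp_mul_left_Ioi'
    (fun u => u * exp (-u) * (1 + (1 - c / √n) / n * u) ^ n) 0 hs
  rw [mul_zero, smul_eq_mul] at hsubst
  rw [← hsubst, ← mul_assoc, ← integral_const_mul, ← integral_const_mul]
  refine setIntegral_congr_fun measurableSet_Ioi fun v _ => ?_
  simp only [spikeIntegrand, spike, if_true]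
  field_simp
  rw [sq_sqrt n.cast_nonneg]

end Spike

theorem stmt_13 (c : ℝ) (hc : 0 < c) :
    Filter.Tendsto (fun n : ℕ =>
      let x : ℝ := c / Real.sqrt n
      let p : Fin (n + 1) → ℝ := fun i => if i = 0 then x else (1 - x) / n
      (1 / 2) * ∑ i, |p i ^ 2 / (∑ j, p j ^ 2) -
          p i ^ 2 * ∑ k ∈ Finset.range (n + 1), (Nat.factorial (k + 1) : ℝ) *
            ∑ J ∈ Finset.powersetCard k (Finset.univ.erase i), ∏ l ∈ J, p l|)
      Filter.atTop
      (nhds (c ^ 2 / (1 + c ^ 2) -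
        ∫ t in Set.Ioi (0 : ℝ), c ^ 2 * t * Real.exp (-c * t - t ^ 2 / 2))) := by
  set I := ∫ v in Ioi 0, v * exp (-c * v - v ^ 2 / 2)
  have hlimit : c ^ 2 / (1 + c ^ 2) - ∫ t in Ioi 0, c ^ 2 * t * exp (-c * t - t ^ 2 / 2) =
      |c ^ 2 / (1 + c ^ 2) - c ^ 2 * I| := by
    have hI : c ^ 2 * I ≤ c ^ 2 / (1 + c ^ 2) := by
      rw [← mul_one_div]
      exact mul_le_mul_of_nonneg_left (integral_mul_exp_neg_mul_sub_sq_le hc) (sq_nonneg c)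
    simp_rw [mul_assoc, integral_const_mul]
    rw [abs_of_nonneg (sub_nonneg.2 hI)]
  have hsquare : Tendsto (fun n : ℕ => c ^ 2 / (c ^ 2 + (1 - c / √n) ^ 2)) atTop
      (𝓝 (c ^ 2 / (1 + c ^ 2))) := by
    have := (((tendsto_one_sub_div_atTop c).comp tendsto_sqrt_natCast_atTop).pow 2).const_add
      (c ^ 2)
    rw [one_pow, add_comm] at this
    exact tendsto_const_nhds.div this (by positivity)
  rw [hlimit]
  refine (hsquare.sub ((tendsto_integral_spikeIntegrand hc).const_mul (c ^ 2))).abs.congr' ?_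
  filter_upwards [eventually_ne_atTop 0, tendsto_sqrt_natCast_atTop.eventually_ge_atTop c]
    with n hn hcn
  have hx : c / √n ≤ 1 := (div_le_one (hc.trans_le hcn)).2 hcn
  rw [← squareProb_spike_zero hn, ← firstRepeatProb_spike_zero hn,
    ← half_sum_abs_squareProb_sub_firstRepeatProb (spike_nonneg (by positivity) hx)
      (sum_spike hn _) fun i hi j hj => spike_eq_of_ne_zero _ hi hj]
  simp only [squareProb, firstRepeatProb, spike, Fintype.card_fin]
end

section
/- The function ℓ(c) = c²/(1+c²) − ∫₀^∞ c² t e^{−ct − t²/2} dt satisfies lim_{c→0⁺} ℓ(c) = 0 and lim_{c→∞} ℓ(c) = 0, and ℓ(c) > 0 for all c ∈ (0,∞). -/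
/-!
With `E(t) = exp (-c t - t² / 2)` and `u = c + t`, the function
`G(t) = (1 + t u) / (1 + u²) · E(t)` satisfies `G' = -(t + 2c / (1 + u²)²) E`,
`G(0) = 1 / (1 + c²)` and `G(∞) = 0`. Hence `c² ∫₀^∞ t E = c² / (1 + c²) - 2c³ K(c)` with
`K(c) = ∫₀^∞ E / (1 + u²)²`, i.e. `ℓ(c) = 2c³ K(c)`. Since `0 < K(c) ≤ √(π/2) / (1 + c²)²`
(bound `E` by the Gaussian), we get `0 < ℓ(c) ≤ √(2π) c³ / (1 + c²)²`, and the bound tends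
to `0` at both ends. Here `E`, `G`, `K` are `tiltedGauss c`, `tiltedPrimitive c` and `ellKernel`.
-/

open Set MeasureTheory Filter Real Topology

noncomputable def tiltedGauss (c t : ℝ) : ℝ := exp (-c * t - t ^ 2 / 2)

noncomputable def tiltedPrimitive (c t : ℝ) : ℝ :=
  (1 + t * (c + t)) / (1 + (c + t) ^ 2) * tiltedGauss c t

noncomputable def ellKernel (c : ℝ) : ℝ :=
  ∫ t in Ioi 0, tiltedGauss c t / (1 + (c + t) ^ 2) ^ 2

lemma tiltedGauss_pos (c t : ℝ) : 0 < tiltedGauss c t := exp_pos _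

lemma continuous_tiltedGauss (c : ℝ) : Continuous (tiltedGauss c) := by
  unfold tiltedGauss; fun_prop

lemma hasDerivAt_tiltedGauss (c t : ℝ) :
    HasDerivAt (tiltedGauss c) (-(c + t) * tiltedGauss c t) t := by
  have h : HasDerivAt (fun t : ℝ => -c * t - t ^ 2 / 2) (-(c + t)) t := by
    refine (((hasDerivAt_id t).const_mul (-c)).sub
      ((hasDerivAt_pow 2 t).div_const 2)).congr_deriv ?_
    norm_num
    ring
  exact h.exp.congr_deriv (mul_comm _ _)

lemma hasDerivAt_tiltedPrimitive (c t : ℝ) :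
    HasDerivAt (tiltedPrimitive c)
      (-(t * tiltedGauss c t + 2 * c * (tiltedGauss c t / (1 + (c + t) ^ 2) ^ 2))) t := by
  have hnum : HasDerivAt (fun t : ℝ => 1 + t * (c + t)) (c + 2 * t) t := by
    refine (((hasDerivAt_id t).mul ((hasDerivAt_id t).const_add c)).const_add 1).congr_deriv ?_
    simp only [id]
    ring
  have hden : HasDerivAt (fun t : ℝ => 1 + (c + t) ^ 2) (2 * (c + t)) t := by
    refine ((((hasDerivAt_id t).const_add c).pow 2).const_add 1).congr_deriv ?_
    norm_num
  have hpos : 1 + (c + t) ^ 2 ≠ 0 := by positivity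
  refine ((hnum.div hden hpos).mul (hasDerivAt_tiltedGauss c t)).congr_deriv ?_
  simp only [Pi.div_apply]
  field_simp
  ring

section NonnegTilt

variable {c : ℝ} (hc : 0 ≤ c)
include hc

lemma tiltedGauss_le_gauss {t : ℝ} (ht : 0 ≤ t) : tiltedGauss c t ≤ exp (-(1 / 2) * t ^ 2) :=
  exp_le_exp.2 (by nlinarith [mul_nonneg hc ht])

lemma integrableOn_tiltedGauss_div :
    IntegrableOn (fun t => tiltedGauss c t / (1 + (c + t) ^ 2) ^ 2) (Ioi 0) := by
  refine (integrable_exp_neg_mul_sq (by norm_num : (0 : ℝ) < 1 / 2)).integrableOn.mono' ?_ ?_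
  · exact ((continuous_tiltedGauss c).div (by fun_prop)
      fun t => by positivity).aestronglyMeasurable.restrict
  · filter_upwards [ae_restrict_mem measurableSet_Ioi] with t ht
    rw [norm_of_nonneg (by have := tiltedGauss_pos c t; positivity)]
    calc tiltedGauss c t / (1 + (c + t) ^ 2) ^ 2 ≤ tiltedGauss c t :=
          div_le_self (tiltedGauss_pos c t).le (one_le_pow₀ (by nlinarith))
      _ ≤ _ := tiltedGauss_le_gauss hc ht.le

lemma integrableOn_mul_tiltedGauss : IntegrableOn (fun t => t * tiltedGauss c t) (Ioi 0) := by
  refine (integrable_mul_exp_neg_mul_sq (by norm_num : (0 : ℝ) < 1 / 2)).integrableOn.mono' ?_ ?_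
  · exact (continuous_id.mul (continuous_tiltedGauss c)).aestronglyMeasurable.restrict
  · filter_upwards [ae_restrict_mem measurableSet_Ioi] with t (ht : 0 < t)
    rw [norm_of_nonneg (mul_nonneg ht.le (tiltedGauss_pos c t).le)]
    exact mul_le_mul_of_nonneg_left (tiltedGauss_le_gauss hc ht.le) ht.le

lemma tendsto_tiltedPrimitive_atTop :
    Tendsto (tiltedPrimitive c) atTop (𝓝 0) := by
  have hgauss : Tendsto (fun t : ℝ => exp (-(1 / 2) * t ^ 2)) atTop (𝓝 0) :=
    tendsto_exp_atBot.comp <|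
      (tendsto_pow_atTop two_ne_zero).const_mul_atTop_of_neg (by norm_num)
  refine squeeze_zero' ?_ ?_ hgauss <;> filter_upwards [eventually_ge_atTop 0] with t ht
  · unfold tiltedPrimitive
    have := tiltedGauss_pos c t
    positivity
  · have hfrac : (1 + t * (c + t)) / (1 + (c + t) ^ 2) ≤ 1 :=
      (div_le_one (by positivity)).2 (by nlinarith [mul_nonneg hc ht])
    exact (mul_le_of_le_one_left (tiltedGauss_pos c t).le hfrac).trans (tiltedGauss_le_gauss hc ht)

lemma integral_mul_tiltedGauss :
    ∫ t in Ioi 0, t * tiltedGauss c t = 1 / (1 + c ^ 2) - 2 * c * ellKernel c := by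
  have hftc := integral_Ioi_of_hasDerivAt_of_tendsto'
    (fun t _ => hasDerivAt_tiltedPrimitive c t)
    ((integrableOn_mul_tiltedGauss hc).add
      ((integrableOn_tiltedGauss_div hc).const_mul (2 * c))).neg
    (tendsto_tiltedPrimitive_atTop hc)
  rw [integral_neg, integral_add (integrableOn_mul_tiltedGauss hc)
    ((integrableOn_tiltedGauss_div hc).const_mul _), integral_const_mul] at hftc
  have hzero : tiltedPrimitive c 0 = 1 / (1 + c ^ 2) := by simp [tiltedPrimitive, tiltedGauss]
  rw [hzero] at hftc
  rw [ellKernel]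
  linarith

lemma ell_eq_mul_ellKernel :
    c ^ 2 / (1 + c ^ 2) - ∫ t in Ioi 0, c ^ 2 * t * exp (-c * t - t ^ 2 / 2)
      = 2 * c ^ 3 * ellKernel c := by
  simp_rw [mul_assoc, integral_const_mul]
  rw [show (fun t => t * exp (-c * t - t ^ 2 / 2)) = fun t => t * tiltedGauss c t from rfl,
    integral_mul_tiltedGauss hc]
  ring

lemma ellKernel_pos : 0 < ellKernel c := by
  refine integral_pos_iff_support_of_nonneg (fun t => ?_) (integrableOn_tiltedGauss_div hc) |>.2 ?_
  · have := tiltedGauss_pos c t; positivity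
  · have hsupp : Function.support (fun t => tiltedGauss c t / (1 + (c + t) ^ 2) ^ 2) = univ :=
      Function.support_eq_univ fun t => by have := tiltedGauss_pos c t; positivity
    simp [hsupp]

lemma ellKernel_le :
    ellKernel c ≤ (∫ t in Ioi 0, exp (-(1 / 2) * t ^ 2)) / (1 + c ^ 2) ^ 2 := by
  rw [ellKernel, ← integral_div]
  refine setIntegral_mono_on (integrableOn_tiltedGauss_div hc)
    ((integrable_exp_neg_mul_sq (by norm_num : (0 : ℝ) < 1 / 2)).integrableOn.div_const _)
    measurableSet_Ioi fun t (ht : 0 < t) => ?_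
  exact div_le_div₀ (exp_pos _).le (tiltedGauss_le_gauss hc ht.le) (by positivity)
    (pow_le_pow_left₀ (by positivity) (by nlinarith) 2)

end NonnegTilt

lemma tendsto_cube_div_one_add_sq_sq_nhdsGT_zero :
    Tendsto (fun c : ℝ => c ^ 3 / (1 + c ^ 2) ^ 2) (𝓝[>] 0) (𝓝 0) := by
  have hcont : Continuous fun c : ℝ => c ^ 3 / (1 + c ^ 2) ^ 2 :=
    (continuous_pow 3).div (by fun_prop) fun c => by positivity
  exact tendsto_nhdsWithin_of_tendsto_nhds (by simpa using hcont.tendsto 0)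

lemma tendsto_cube_div_one_add_sq_sq_atTop :
    Tendsto (fun c : ℝ => c ^ 3 / (1 + c ^ 2) ^ 2) atTop (𝓝 0) := by
  refine squeeze_zero' ?_ ?_ tendsto_inv_atTop_zero <;>
    filter_upwards [eventually_gt_atTop 0] with c hc
  · positivity
  · rw [div_le_iff₀ (by positivity), ← div_eq_inv_mul, le_div_iff₀ hc]
    nlinarith [pow_pos hc 4, sq_nonneg c]

theorem stmt_16 (ℓ : ℝ → ℝ)
    (hℓ : ∀ c, ℓ c = c ^ 2 / (1 + c ^ 2) -
      ∫ t in Set.Ioi (0 : ℝ), c ^ 2 * t * Real.exp (-c * t - t ^ 2 / 2)) :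
    Filter.Tendsto ℓ (nhdsWithin 0 (Set.Ioi 0)) (nhds 0) ∧
    Filter.Tendsto ℓ Filter.atTop (nhds 0) ∧
    ∀ c > (0 : ℝ), 0 < ℓ c := by
  set C := ∫ t in Ioi 0, exp (-(1 / 2) * t ^ 2)
  have hpos : ∀ c > (0 : ℝ), 0 < ℓ c := fun c hc => by
    rw [hℓ, ell_eq_mul_ellKernel hc.le]
    exact mul_pos (by positivity) (ellKernel_pos hc.le)
  have hbound : ∀ c > (0 : ℝ), ℓ c ≤ 2 * C * (c ^ 3 / (1 + c ^ 2) ^ 2) := fun c hc => by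
    rw [hℓ, ell_eq_mul_ellKernel hc.le]
    calc 2 * c ^ 3 * ellKernel c ≤ 2 * c ^ 3 * (C / (1 + c ^ 2) ^ 2) :=
          mul_le_mul_of_nonneg_left (ellKernel_le hc.le) (by positivity)
      _ = _ := by ring
  have hsqueeze : ∀ l : Filter ℝ, (∀ᶠ c in l, 0 < c) →
      Tendsto (fun c : ℝ => c ^ 3 / (1 + c ^ 2) ^ 2) l (𝓝 0) → Tendsto ℓ l (𝓝 0) :=
    fun l hl hlim => by
      refine squeeze_zero' (hl.mono fun c hc => (hpos c hc).le) (hl.mono hbound) ?_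
      simpa using hlim.const_mul (2 * C)
  exact ⟨hsqueeze _ self_mem_nhdsWithin tendsto_cube_div_one_add_sq_sq_nhdsGT_zero,
    hsqueeze _ (eventually_gt_atTop 0) tendsto_cube_div_one_add_sq_sq_atTop, hpos⟩
end
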